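/- arXiv:0901.1156 — 5 statements merged into one kernel-verified Lean document; each statement's English description precedes it below -/
import Mathlib

section
/- Let V be a finite-dimensional vector space with a flag F = (0 = V_0 ≤ V_1 ≤ ... ≤ V_k = V) and let U ≤ V be a subspace. Then U is transversal to F (i.e., transversal to each V_i) if and only if ⟨U, V_{k_U}⟩ = V, where k_U = min{ i | U ∩ V_i ≠ 0 } (assuming U ≠ 0). -/
/-- A nonzero subspace `U` is transversal to a flag
`0 = V_0 ≤ V_1 ≤ ... ≤ V_k = V` iff `U ⊔ V_{k_U} = ⊤`, where
`k_U = min { i | U ⊓ V_i ≠ 0 }`. -/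
theorem transversal_flag_iff {F V : Type*} [Field F] [AddCommGroup V] [Module F V]
    [FiniteDimensional F V] (k : ℕ) (Vflag : ℕ → Submodule F V)
    (hmono : Monotone Vflag) (h0 : Vflag 0 = ⊥) (htop : Vflag k = ⊤)
    (U : Submodule F V) (hU : U ≠ ⊥)
    (kU : ℕ) (hkU : U ⊓ Vflag kU ≠ ⊥) (hkUmin : ∀ j < kU, U ⊓ Vflag j = ⊥) :
    (∀ i ≤ k, U ⊓ Vflag i = ⊥ ∨ U ⊔ Vflag i = ⊤) ↔ U ⊔ Vflag kU = ⊤ := by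
  constructor
  · intro h
    by_cases hk : kU ≤ k
    · rcases h kU hk with h1 | h2
      · exact absurd h1 hkU
      · exact h2
    · have hV : Vflag kU = ⊤ := top_unique (htop ▸ hmono (le_of_not_ge hk))
      rw [hV, sup_top_eq]
  · intro h i _
    rcases lt_or_ge i kU with hlt | hge
    · exact Or.inl (hkUmin i hlt)
    · exact Or.inr (top_unique (h ▸ sup_le_sup_left (hmono hge) U))
end

section
/- Let V be a finite-dimensional vector space with a nondegenerate reflexive sesquilinear form, let F = (0 = V_0 ≤ ... ≤ V_k = V) be a flag satisfying F^⊥ = F (i.e., V_i^⊥ = V_{k-i} for all i), and let U ≤ V be transversal to F. Then U^⊥ is also transversal to F. -/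
variable {F V : Type*} [Field F] [AddCommGroup V] [Module F V]

/-- The orthogonal complement of a subspace with respect to a sesquilinear form. -/
def sesqPerp {σ : F →+* F} (B : V →ₗ[F] V →ₛₗ[σ] F) (A : Submodule F V) :
    Submodule F V where
  carrier := {v | ∀ a ∈ A, B v a = 0}
  add_mem' := by
    intro x y hx hy a ha
    simp [map_add, hx a ha, hy a ha]
  zero_mem' := by intro a _; simp
  smul_mem' := by
    intro c x hx a ha
    simp [map_smul, hx a ha]

/-! Nondegeneracy gives `dim A^⊥ = dim V - dim A`, and `(A + C)^⊥ = A^⊥ ∩ C^⊥`. Since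
`V_i = V_{k-i}^⊥`, transversality of `U^⊥` to `V_i` is the perp of transversality of `U` to
`V_{k-i}`: `U + V_{k-i} = V` gives `U^⊥ ∩ V_i = V^⊥ = 0`, and `U ∩ V_{k-i} = 0` gives
`U^⊥ + V_i = V` by counting dimensions. -/

open Module

section SemilinearDual

variable {σ : F →+* F} {M : Type*} [AddCommGroup M] [Module F M]

/-- A semilinear functional is a sesquilinear map `F × M → F`, so it has a `1 × ι` matrix. -/
noncomputable def Module.Basis.semilinearMapSelfEquivMatrix {ι : Type*} [Fintype ι]
    [DecidableEq ι] (b : Basis ι F M) : (M →ₛₗ[σ] F) ≃ₗ[F] Matrix Unit ι F :=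
  (LinearMap.ringLmapEquivSelf F F (M →ₛₗ[σ] F)).symm ≪≫ₗ
    LinearMap.toMatrix₂ (Basis.singleton Unit F) b

variable [FiniteDimensional F M]

instance : FiniteDimensional F (M →ₛₗ[σ] F) :=
  .equiv (finBasis F M).semilinearMapSelfEquivMatrix.symm

theorem finrank_semilinearMap_self : finrank F (M →ₛₗ[σ] F) = finrank F M := by
  rw [(finBasis F M).semilinearMapSelfEquivMatrix.finrank_eq]
  simp [finrank_matrix]

end SemilinearDual

section Perp

variable {σ : F →+* F} (B : V →ₗ[F] V →ₛₗ[σ] F)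

theorem sesqPerp_sup (A C : Submodule F V) :
    sesqPerp B (A ⊔ C) = sesqPerp B A ⊓ sesqPerp B C := by
  apply le_antisymm
  · intro v hv
    exact ⟨fun a ha => hv a (Submodule.mem_sup_left ha),
      fun c hc => hv c (Submodule.mem_sup_right hc)⟩
  · rintro v ⟨hA, hC⟩ x hx
    obtain ⟨a, ha, c, hc, rfl⟩ := Submodule.mem_sup.1 hx
    rw [map_add, hA a ha, hC c hc, add_zero]

theorem sesqPerp_eq_ker_compl₂_subtype (A : Submodule F V) :
    sesqPerp B A = LinearMap.ker (B.compl₂ A.subtype) := by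
  ext v
  simp only [LinearMap.mem_ker, LinearMap.ext_iff, LinearMap.compl₂_apply,
    Submodule.subtype_apply, LinearMap.zero_apply, Subtype.forall]
  rfl

theorem disjoint_sesqPerp_of_codisjoint (hnd : sesqPerp B ⊤ = ⊥) {U W : Submodule F V}
    (h : Codisjoint U W) : Disjoint (sesqPerp B U) (sesqPerp B W) := by
  rw [disjoint_iff, ← sesqPerp_sup, h.eq_top, hnd]

variable [FiniteDimensional F V]

theorem finrank_sub_le_finrank_sesqPerp (A : Submodule F V) :
    finrank F V - finrank F A ≤ finrank F (sesqPerp B A) := by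
  have hrank := LinearMap.finrank_range_add_finrank_ker (B.compl₂ A.subtype)
  have hrange : finrank F (LinearMap.range (B.compl₂ A.subtype)) ≤ finrank F A :=
    finrank_semilinearMap_self (σ := σ) (M := A) ▸ Submodule.finrank_le _
  rw [sesqPerp_eq_ker_compl₂_subtype]
  omega

/-- Applying the lower bound to `A` and to a complement `C` of `A`, whose perps meet in
`V^⊥ = 0`, forces equality. -/
theorem finrank_sesqPerp (hnd : sesqPerp B ⊤ = ⊥) (A : Submodule F V) :
    finrank F (sesqPerp B A) = finrank F V - finrank F A := by
  obtain ⟨C, hAC⟩ := A.exists_isCompl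
  have hperp_inf : sesqPerp B A ⊓ sesqPerp B C = ⊥ := by
    rw [← sesqPerp_sup, hAC.sup_eq_top, hnd]
  have hsum := Submodule.finrank_sup_add_finrank_inf_eq (sesqPerp B A) (sesqPerp B C)
  rw [hperp_inf, finrank_bot] at hsum
  have := Submodule.finrank_add_eq_of_isCompl hAC
  have := finrank_sub_le_finrank_sesqPerp B A
  have := finrank_sub_le_finrank_sesqPerp B C
  have := Submodule.finrank_le (sesqPerp B A ⊔ sesqPerp B C)
  omega

theorem codisjoint_sesqPerp_of_disjoint (hnd : sesqPerp B ⊤ = ⊥) {U W : Submodule F V}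
    (h : Disjoint U W) : Codisjoint (sesqPerp B U) (sesqPerp B W) := by
  rw [codisjoint_iff]
  apply Submodule.eq_top_of_finrank_eq
  have hUW := Submodule.finrank_sup_add_finrank_inf_eq U W
  have hperp := Submodule.finrank_sup_add_finrank_inf_eq (sesqPerp B U) (sesqPerp B W)
  rw [h.eq_bot, finrank_bot] at hUW
  rw [← sesqPerp_sup, finrank_sesqPerp B hnd, finrank_sesqPerp B hnd,
    finrank_sesqPerp B hnd] at hperp
  have := Submodule.finrank_le (U ⊔ W)
  omega

end Perp

theorem perp_transversal_of_transversal_general {σ : F →+* F} [FiniteDimensional F V]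
    (B : V →ₗ[F] V →ₛₗ[σ] F)
    (hnd : sesqPerp B ⊤ = ⊥)
    (k : ℕ) (Vflag : ℕ → Submodule F V)
    (hflagperp : ∀ i ≤ k, sesqPerp B (Vflag i) = Vflag (k - i))
    (U : Submodule F V)
    (hU : ∀ i ≤ k, U ⊓ Vflag i = ⊥ ∨ U ⊔ Vflag i = ⊤) :
    ∀ i ≤ k, sesqPerp B U ⊓ Vflag i = ⊥ ∨ sesqPerp B U ⊔ Vflag i = ⊤ := by
  intro i hi
  have hVi : Vflag i = sesqPerp B (Vflag (k - i)) := by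
    rw [hflagperp (k - i) (Nat.sub_le k i), Nat.sub_sub_self hi]
  rw [hVi, ← disjoint_iff, ← codisjoint_iff]
  rcases hU (k - i) (Nat.sub_le k i) with hdisj | hcodisj
  · exact Or.inr (codisjoint_sesqPerp_of_disjoint B hnd (disjoint_iff.2 hdisj))
  · exact Or.inl (disjoint_sesqPerp_of_codisjoint B hnd (codisjoint_iff.2 hcodisj))

/-- If `F` is a flag with `F^⊥ = F` (i.e. `V_i^⊥ = V_{k-i}`) and `U` is
transversal to `F`, then `U^⊥` is transversal to `F`. -/
theorem perp_transversal_of_transversal {σ : F →+* F} [FiniteDimensional F V]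
    (B : V →ₗ[F] V →ₛₗ[σ] F)
    (hrefl : ∀ x y : V, B x y = 0 → B y x = 0)
    (hnd : sesqPerp B ⊤ = ⊥)
    (k : ℕ) (Vflag : ℕ → Submodule F V)
    (hmono : Monotone Vflag) (h0 : Vflag 0 = ⊥) (htop : Vflag k = ⊤)
    (hflagperp : ∀ i ≤ k, sesqPerp B (Vflag i) = Vflag (k - i))
    (U : Submodule F V)
    (hU : ∀ i ≤ k, U ⊓ Vflag i = ⊥ ∨ U ⊔ Vflag i = ⊤) :
    ∀ i ≤ k, sesqPerp B U ⊓ Vflag i = ⊥ ∨ sesqPerp B U ⊔ Vflag i = ⊤ :=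
  perp_transversal_of_transversal_general B hnd k Vflag hflagperp U hU
end

section
/- Let F be a field with |F| ≥ 2m if F is finite, let V be a 2-dimensional F-vector space, and let ω_1, ..., ω_m be symmetric bilinear forms on V, each admitting a non-isotropic vector. Then there is a vector u ∈ V that is non-isotropic for all ω_i simultaneously, i.e., ω_i(u,u) ≠ 0 for 1 ≤ i ≤ m. -/
open Module Polynomial

/-- If `V` is a 2-dimensional vector space over a field `F` with
`|F| ≥ 2m` when `F` is finite, and `ω_1, ..., ω_m` are symmetric bilinear forms each
admitting a non-isotropic vector, then some vector is non-isotropic for all of them. -/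
theorem exists_common_nonisotropic_symm {F V : Type*} [Field F] [AddCommGroup V]
    [Module F V] (hdim : finrank F V = 2) (m : ℕ)
    (ω : Fin m → (V →ₗ[F] V →ₗ[F] F))
    (hsymm : ∀ i, ∀ x y : V, ω i x y = ω i y x)
    (hniso : ∀ i, ∃ v : V, ω i v v ≠ 0)
    (hcard : ∀ _ : Finite F, 2 * m ≤ Nat.card F) :
    ∃ u : V, ∀ i, ω i u u ≠ 0 := by
  classical
  rcases Nat.eq_zero_or_pos m with rfl | hm
  · exact ⟨0, fun i => i.elim0⟩
  have hFD : FiniteDimensional F V := FiniteDimensional.of_finrank_pos (by omega)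
  let b : Basis (Fin 2) F V := finBasisOfFinrankEq F V hdim
  set e1 := b 0 with he1
  set e2 := b 1 with he2
  set A : Fin m → F := fun i => ω i e1 e1 with hA
  set B : Fin m → F := fun i => ω i e1 e2 with hB
  set Cc : Fin m → F := fun i => ω i e2 e2 with hCc
  have hexp : ∀ i (x y : F), ω i (x • e1 + y • e2) (x • e1 + y • e2)
      = A i * x ^ 2 + (2 * B i) * (x * y) + Cc i * y ^ 2 := by
    intro i x y
    simp only [map_add, map_smul, LinearMap.add_apply, LinearMap.smul_apply, smul_eq_mul,
      hA, hB, hCc]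
    rw [hsymm i e2 e1]
    ring
  have hrepr : ∀ v : V, v = (b.repr v 0) • e1 + (b.repr v 1) • e2 := by
    intro v
    have h := b.sum_repr v
    rw [Fin.sum_univ_two] at h
    exact h.symm
  set p : Fin m → F[X] := fun i => C (A i) + C (2 * B i) * X + C (Cc i) * X ^ 2 with hp
  have hpne : ∀ i, p i ≠ 0 := by
    intro i hp0
    have h0 : A i = 0 := by
      have := congrArg (fun q => Polynomial.coeff q 0) hp0
      simpa [p] using this
    have h1 : 2 * B i = 0 := by
      have := congrArg (fun q => Polynomial.coeff q 1) hp0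
      simpa [p] using this
    have h2 : Cc i = 0 := by
      have := congrArg (fun q => Polynomial.coeff q 2) hp0
      simpa [p] using this
    obtain ⟨v, hv⟩ := hniso i
    apply hv
    rw [hrepr v, hexp, h0, h1, h2]
    ring
  have heval : ∀ i t, (p i).eval t = ω i (e1 + t • e2) (e1 + t • e2) := by
    intro i t
    have h := hexp i 1 t
    rw [one_smul] at h
    rw [h]
    simp [p]
  by_cases hCall : ∀ i, Cc i ≠ 0
  · exact ⟨e2, hCall⟩
  push_neg at hCall
  obtain ⟨j, hj⟩ := hCall
  have hdeg : ∀ i, (p i).natDegree ≤ 2 := by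
    intro i
    rw [hp]
    refine (Polynomial.natDegree_add_le _ _).trans (max_le ((Polynomial.natDegree_add_le _ _).trans (max_le ?_ ?_)) ?_)
    · simp
    · exact (Polynomial.natDegree_C_mul_le _ _).trans (by simp)
    · exact (Polynomial.natDegree_C_mul_le _ _).trans (by simp)
  have hdegj : (p j).natDegree < 2 := by
    have : p j = C (A j) + C (2 * B j) * X := by
      rw [hp]; simp [hj]
    rw [this]
    have : (C (A j) + C (2 * B j) * X).natDegree ≤ 1 := by compute_degree
    omega
  set T : Finset F := Finset.univ.biUnion (fun i => (p i).roots.toFinset) with hT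
  have hTcard : T.card < 2 * m := by
    calc T.card ≤ ∑ i, (p i).roots.toFinset.card := Finset.card_biUnion_le
    _ ≤ ∑ i, (p i).natDegree := by
        apply Finset.sum_le_sum
        intro i _
        exact le_trans (Multiset.toFinset_card_le _) (Polynomial.card_roots' _)
    _ < ∑ _i : Fin m, 2 := by
        apply Finset.sum_lt_sum (fun i _ => hdeg i)
        exact ⟨j, Finset.mem_univ j, hdegj⟩
    _ = 2 * m := by simp [mul_comm]
  have hex : ∃ t : F, t ∉ T := by
    rcases finite_or_infinite F with hF | hF
    · have hFt : Fintype F := Fintype.ofFinite F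
      have h2m : 2 * m ≤ Fintype.card F := by
        have := hcard hF
        rwa [Nat.card_eq_fintype_card] at this
      have : T ≠ Finset.univ := by
        intro h
        rw [h, Finset.card_univ] at hTcard
        omega
      by_contra hcon
      push_neg at hcon
      exact this (Finset.eq_univ_iff_forall.mpr hcon)
    · exact Infinite.exists_notMem_finset T
  obtain ⟨t, ht⟩ := hex
  refine ⟨e1 + t • e2, fun i hzero => ht ?_⟩
  rw [hT]
  apply Finset.mem_biUnion.mpr
  refine ⟨i, Finset.mem_univ i, ?_⟩
  rw [Multiset.mem_toFinset, Polynomial.mem_roots (hpne i)]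
  rw [Polynomial.IsRoot, heval i t]
  exact hzero
end

section
/- Let q be a prime power, F = F_{q^2}, σ the automorphism x ↦ x^q, and m ≥ 1 with q^2 ≥ (q+1)m. Let V be a 2-dimensional F-vector space and ω_1, ..., ω_m be σ-hermitian forms on V, each admitting a non-isotropic vector. Then there exists u ∈ V with ω_i(u,u) ≠ 0 for all 1 ≤ i ≤ m. -/
/-!
Parametrize the `q ^ 2 + 1` points of the projective line `ℙ(V)` by `f` and `e + t • f`
(`t : F`) for a basis `e, f`. Since `σ t = t ^ q`, the value `ω (e + t • f) (e + t • f)` is a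
polynomial in `t` of degree at most `q + 1`, and at most `q` when `f` is isotropic; it is nonzero
as soon as `ω` has a non-isotropic vector, because every vector is a multiple of one of the
representatives. So each `ω i` has at most `q + 1` isotropic points, and `(q + 1) * m < q ^ 2 + 1`
leaves a point that is isotropic for none of them.
-/

open Module Polynomial Finset

section

variable {F V : Type*} [Field F] [AddCommGroup V] [Module F V] {σ : F →+* F}

def projLineRep (e f : V) : Option F → V
  | none => f
  | some t => e + t • f

@[simp]
lemma projLineRep_none (e f : V) : projLineRep (F := F) e f none = f := rfl

@[simp]
lemma projLineRep_some (e f : V) (t : F) : projLineRep e f (some t) = e + t • f := rfl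

lemma exists_eq_smul_projLineRep (B : Basis (Fin 2) F V) (v : V) :
    ∃ (s : F) (o : Option F), v = s • projLineRep (B 0) (B 1) o := by
  obtain ⟨x, y, rfl⟩ : ∃ x y : F, v = x • B 0 + y • B 1 :=
    ⟨B.repr v 0, B.repr v 1, by
      rw [← Fin.sum_univ_two (f := fun i => B.repr v i • B i), B.sum_repr]⟩
  by_cases hx : x = 0
  · exact ⟨y, none, by simp [hx]⟩
  · exact ⟨x, some (y / x), by rw [projLineRep_some, smul_add, smul_smul, mul_div_cancel₀ _ hx]⟩

lemma sesqForm_smul_self (ω : V →ₗ[F] V →ₛₗ[σ] F) (s : F) (v : V) :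
    ω (s • v) (s • v) = s * σ s * ω v v := by
  simp only [map_smul, LinearMap.smul_apply, map_smulₛₗ, smul_eq_mul]
  ring

lemma exists_projLineRep_ne_zero (B : Basis (Fin 2) F V) (ω : V →ₗ[F] V →ₛₗ[σ] F)
    (h : ∃ v, ω v v ≠ 0) :
    ∃ o : Option F, ω (projLineRep (B 0) (B 1) o) (projLineRep (B 0) (B 1) o) ≠ 0 := by
  obtain ⟨v, hv⟩ := h
  obtain ⟨s, o, rfl⟩ := exists_eq_smul_projLineRep B v
  exact ⟨o, right_ne_zero_of_mul (sesqForm_smul_self ω s _ ▸ hv :)⟩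

noncomputable def isotropyPoly (ω : V →ₗ[F] V →ₛₗ[σ] F) (e f : V) (q : ℕ) : F[X] :=
  C (ω e e) + C (ω f e) * X + C (ω e f) * X ^ q + C (ω f f) * X ^ (q + 1)

lemma eval_isotropyPoly {q : ℕ} (hσ : ∀ x : F, σ x = x ^ q)
    (ω : V →ₗ[F] V →ₛₗ[σ] F) (e f : V) (t : F) :
    (isotropyPoly ω e f q).eval t = ω (e + t • f) (e + t • f) := by
  simp only [isotropyPoly, eval_add, eval_mul, eval_C, eval_X, eval_pow, map_add, map_smul,
    LinearMap.add_apply, LinearMap.smul_apply, map_smulₛₗ, smul_eq_mul, hσ]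
  ring

lemma coeff_isotropyPoly_succ {q : ℕ} (hq : 1 ≤ q) (ω : V →ₗ[F] V →ₛₗ[σ] F) (e f : V) :
    (isotropyPoly ω e f q).coeff (q + 1) = ω f f := by
  simp [isotropyPoly, coeff_C, coeff_X_pow]
  omega

lemma natDegree_isotropyPoly_le (q : ℕ) (ω : V →ₗ[F] V →ₛₗ[σ] F) (e f : V) :
    (isotropyPoly ω e f q).natDegree ≤ q + 1 := by
  unfold isotropyPoly
  compute_degree

lemma natDegree_isotropyPoly_le_of_isotropic {q : ℕ} (hq : 1 ≤ q) (ω : V →ₗ[F] V →ₛₗ[σ] F)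
    (e : V) {f : V} (hf : ω f f = 0) : (isotropyPoly ω e f q).natDegree ≤ q := by
  rw [isotropyPoly, hf, map_zero, zero_mul, add_zero]
  compute_degree
  omega

section Fintype

variable [Fintype F] [DecidableEq F]

def isotropicPoints (ω : V →ₗ[F] V →ₛₗ[σ] F) (e f : V) : Finset (Option F) :=
  {o | ω (projLineRep e f o) (projLineRep e f o) = 0}

@[simp]
lemma mem_isotropicPoints {ω : V →ₗ[F] V →ₛₗ[σ] F} {e f : V} {o : Option F} :
    o ∈ isotropicPoints ω e f ↔ ω (projLineRep e f o) (projLineRep e f o) = 0 := by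
  simp [isotropicPoints]

lemma card_isotropicPoints_le {q : ℕ} (hq : 1 ≤ q) (hσ : ∀ x : F, σ x = x ^ q)
    (B : Basis (Fin 2) F V) (ω : V →ₗ[F] V →ₛₗ[σ] F) (hω : ∃ v, ω v v ≠ 0) :
    #(isotropicPoints ω (B 0) (B 1)) ≤ q + 1 := by
  set S := isotropicPoints ω (B 0) (B 1)
  set p := isotropyPoly ω (B 0) (B 1) q
  have hS : ∀ t, t ∈ S.eraseNone ↔ p.eval t = 0 := fun t => by
    simp [S, p, eval_isotropyPoly hσ]
  have hroots (hp : p ≠ 0) : #S.eraseNone ≤ p.natDegree :=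
    card_le_degree_of_subset_roots fun t ht => (mem_roots hp).2 ((hS t).1 ht)
  by_cases hc : ω (B 1) (B 1) = 0
  · have hp : p ≠ 0 := by
      obtain ⟨o | t, ho⟩ := exists_projLineRep_ne_zero B ω hω
      · exact absurd hc ho
      · intro hp
        apply ho
        rw [projLineRep_some, ← eval_isotropyPoly hσ]
        exact (congrArg (eval t) hp).trans eval_zero
    have hcard_S := card_eraseNone_of_mem (s := S) (by simpa [S])
    have hdeg : p.natDegree ≤ q := natDegree_isotropyPoly_le_of_isotropic hq ω (B 0) hc
    have := hroots hp
    omega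
  · have hp : p ≠ 0 := by
      rintro hp
      apply hc
      rw [← coeff_isotropyPoly_succ hq ω (B 0) (B 1)]
      exact (congrArg (coeff · (q + 1)) hp).trans (coeff_zero _)
    rw [← card_eraseNone_of_not_mem (by simpa [S])]
    exact (hroots hp).trans (natDegree_isotropyPoly_le q ω _ _)

end Fintype

end

theorem exists_common_nonisotropic_hermitian_general {F V : Type*} [Field F] [Fintype F]
    [AddCommGroup V] [Module F V] (q m : ℕ)
    (hF : Fintype.card F = q ^ 2)
    (σ : F →+* F) (hσ : ∀ x : F, σ x = x ^ q)
    (hcard : (q + 1) * m ≤ q ^ 2)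
    (hdim : finrank F V = 2)
    (ω : Fin m → (V →ₗ[F] V →ₛₗ[σ] F))
    (hniso : ∀ i, ∃ v : V, ω i v v ≠ 0) :
    ∃ u : V, ∀ i, ω i u u ≠ 0 := by
  classical
  have hq : 1 ≤ q := Nat.pos_of_ne_zero fun h => by simp [h] at hF
  have : Module.Finite F V := Module.finite_of_finrank_eq_succ hdim
  let B := Module.finBasisOfFinrankEq F V hdim
  let isotropic (i : Fin m) := isotropicPoints (ω i) (B 0) (B 1)
  have hlt : #(univ.biUnion isotropic) < #(univ : Finset (Option F)) := calc
    #(univ.biUnion isotropic) ≤ ∑ i, #(isotropic i) := card_biUnion_le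
    _ ≤ ∑ _i : Fin m, (q + 1) :=
      sum_le_sum fun i _ => card_isotropicPoints_le hq hσ B (ω i) (hniso i)
    _ = (q + 1) * m := by simp [mul_comm]
    _ < #(univ : Finset (Option F)) := by rw [card_univ, Fintype.card_option, hF]; omega
  obtain ⟨o, -, ho⟩ := exists_mem_notMem_of_card_lt_card hlt
  exact ⟨projLineRep (B 0) (B 1) o, fun i hi =>
    ho (mem_biUnion.2 ⟨i, mem_univ i, mem_isotropicPoints.2 hi⟩)⟩

/-- Over `F = F_{q^2}` with involution `σ : x ↦ x^q` and `q^2 ≥ (q+1)m`,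
given `m` σ-hermitian forms on a 2-dimensional `F`-vector space, each admitting a
non-isotropic vector, there is a common non-isotropic vector. -/
theorem exists_common_nonisotropic_hermitian {F V : Type*} [Field F] [Fintype F]
    [AddCommGroup V] [Module F V] (q m : ℕ)
    (hq : ∃ (p n : ℕ), p.Prime ∧ 0 < n ∧ q = p ^ n)
    (hF : Fintype.card F = q ^ 2)
    (σ : F →+* F) (hσ : ∀ x : F, σ x = x ^ q)
    (hm : 1 ≤ m) (hcard : (q + 1) * m ≤ q ^ 2)
    (hdim : finrank F V = 2)
    (ω : Fin m → (V →ₗ[F] V →ₛₗ[σ] F))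
    (hherm : ∀ i, ∀ x y : V, ω i x y = σ (ω i y x))
    (hniso : ∀ i, ∃ v : V, ω i v v ≠ 0) :
    ∃ u : V, ∀ i, ω i u u ≠ 0 :=
  exists_common_nonisotropic_hermitian_general q m hF σ hσ hcard hdim ω hniso
end

section
/- Let V be a finite-dimensional vector space, U ≨ U' ≤ V subspaces, and H a hyperplane of V with U ⊄ H. Then there is a linear isomorphism φ: U'/U → (U' ∩ H)/(U ∩ H) such that φ(W/U) = (W ∩ H)/(U ∩ H) for every intermediate subspace U ≤ W ≤ U'. -/
open Module

private lemma map_symm_map_aux {F M N : Type*} [Field F] [AddCommGroup M] [Module F M]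
    [AddCommGroup N] [Module F N] (e : M ≃ₗ[F] N) (p : Submodule F M) :
    Submodule.map (e.symm : N →ₗ[F] M) (Submodule.map (e : M →ₗ[F] N) p) = p := by
  ext x
  simp [Submodule.mem_map]

/-- If `U ≨ U' ≤ V`, `H` is a hyperplane of `V` and `U ⊄ H`, then there
is a linear isomorphism `φ : U'/U ≃ (U' ⊓ H)/(U ⊓ H)` mapping `W/U` to `(W ⊓ H)/(U ⊓ H)`
for every intermediate subspace `U ≤ W ≤ U'`. -/
theorem quotient_iso_inf_hyperplane {F V : Type*} [Field F] [AddCommGroup V] [Module F V]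
    [FiniteDimensional F V] (U U' H : Submodule F V) (hUU' : U < U') (hU'le : U' ≤ ⊤)
    (hH : finrank F H + 1 = finrank F V) (hUH : ¬ U ≤ H) :
    ∃ φ : (↥U' ⧸ U.comap U'.subtype) ≃ₗ[F] (↥(U' ⊓ H) ⧸ (U ⊓ H).comap (U' ⊓ H).subtype),
      ∀ W : Submodule F V, U ≤ W → W ≤ U' →
        Submodule.map (φ : (↥U' ⧸ U.comap U'.subtype) →ₗ[F]
            (↥(U' ⊓ H) ⧸ (U ⊓ H).comap (U' ⊓ H).subtype))
          (Submodule.map (Submodule.mkQ (U.comap U'.subtype)) (W.comap U'.subtype)) =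
        Submodule.map (Submodule.mkQ ((U ⊓ H).comap (U' ⊓ H).subtype))
          ((W ⊓ H).comap (U' ⊓ H).subtype) := by
  classical
  obtain ⟨u, huU, huH⟩ := SetLike.not_le_iff_exists.mp hUH
  -- `H ⊔ span u = ⊤`
  have htop : H ⊔ Submodule.span F {u} = ⊤ := by
    have hlt : H < H ⊔ Submodule.span F {u} := by
      refine lt_of_le_of_ne le_sup_left ?_
      intro h
      exact huH (h ▸ (le_sup_right : Submodule.span F {u} ≤ H ⊔ _)
        (Submodule.mem_span_singleton_self u))
    have h1 : finrank F H < finrank F ↥(H ⊔ Submodule.span F {u}) :=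
      Submodule.finrank_lt_finrank_of_lt hlt
    have h2 : finrank F ↥(H ⊔ Submodule.span F {u}) ≤ finrank F V :=
      Submodule.finrank_le _
    exact Submodule.eq_top_of_finrank_eq (by omega)
  have hdecomp : ∀ x : V, ∃ c : F, x - c • u ∈ H := by
    intro x
    have hx : x ∈ H ⊔ Submodule.span F {u} := htop ▸ Submodule.mem_top
    obtain ⟨h, hh, s, hs, hsum⟩ := Submodule.mem_sup.mp hx
    obtain ⟨c, rfl⟩ := Submodule.mem_span_singleton.mp hs
    exact ⟨c, by rw [← hsum]; simpa using hh⟩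
  set L := U.comap U'.subtype with hL
  set K := (U ⊓ H).comap (U' ⊓ H).subtype with hK
  set f0 : ↥(U' ⊓ H) →ₗ[F] ↥U' ⧸ L :=
    L.mkQ ∘ₗ Submodule.inclusion inf_le_left with hf0
  have hker : LinearMap.ker f0 = K := by
    ext x
    obtain ⟨hxU', hxH⟩ := Submodule.mem_inf.mp x.2
    simp [hf0, hL, hK, Submodule.Quotient.mk_eq_zero, Submodule.inclusion,
      Submodule.mem_inf, hxH]
  set f : (↥(U' ⊓ H) ⧸ K) →ₗ[F] (↥U' ⧸ L) := K.liftQ f0 hker.ge with hf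
  have hfmk : ∀ x : ↥(U' ⊓ H), f (K.mkQ x) = f0 x := fun x => rfl
  have hinj : Function.Injective f := by
    rw [← LinearMap.ker_eq_bot, hf]
    exact Submodule.ker_liftQ_eq_bot _ _ _ hker.le
  have hsurj : Function.Surjective f := by
    intro y
    obtain ⟨x, rfl⟩ := L.mkQ_surjective y
    obtain ⟨c, hc⟩ := hdecomp (x : V)
    have hz' : (x : V) - c • u ∈ U' := sub_mem x.2 (Submodule.smul_mem _ _ (hUU'.le huU))
    refine ⟨K.mkQ ⟨(x : V) - c • u, Submodule.mem_inf.mpr ⟨hz', hc⟩⟩, ?_⟩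
    rw [hfmk]
    show L.mkQ _ = L.mkQ x
    rw [Submodule.mkQ_apply, Submodule.mkQ_apply, Submodule.Quotient.eq]
    have hmem : (x : V) - c • u - (x : V) ∈ U := by
      simpa [sub_sub_cancel_left] using neg_mem (Submodule.smul_mem U c huU)
    simpa [hL, Submodule.inclusion] using hmem
  set e : (↥(U' ⊓ H) ⧸ K) ≃ₗ[F] (↥U' ⧸ L) := LinearEquiv.ofBijective f ⟨hinj, hsurj⟩ with he
  have hecoe : (e : (↥(U' ⊓ H) ⧸ K) →ₗ[F] (↥U' ⧸ L)) = f := rfl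
  refine ⟨e.symm, ?_⟩
  intro W hUW hWU'
  have claim : Submodule.map f (Submodule.map K.mkQ ((W ⊓ H).comap (U' ⊓ H).subtype))
      = Submodule.map L.mkQ (W.comap U'.subtype) := by
    ext y
    simp only [Submodule.mem_map, Submodule.mem_comap]
    constructor
    · rintro ⟨_, ⟨x, hx, rfl⟩, rfl⟩
      refine ⟨Submodule.inclusion inf_le_left x, hx.1, ?_⟩
      rw [hfmk]
      rfl
    · rintro ⟨w, hw, rfl⟩
      obtain ⟨c, hc⟩ := hdecomp (w : V)
      have hz' : (w : V) - c • u ∈ U' := sub_mem w.2 (Submodule.smul_mem _ _ (hUU'.le huU))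
      have hzW : (w : V) - c • u ∈ W := sub_mem hw (Submodule.smul_mem _ _ (hUW huU))
      refine ⟨K.mkQ ⟨(w : V) - c • u, Submodule.mem_inf.mpr ⟨hz', hc⟩⟩,
        ⟨⟨(w : V) - c • u, Submodule.mem_inf.mpr ⟨hz', hc⟩⟩,
          Submodule.mem_inf.mpr ⟨hzW, hc⟩, rfl⟩, ?_⟩
      rw [hfmk]
      show L.mkQ _ = L.mkQ w
      rw [Submodule.mkQ_apply, Submodule.mkQ_apply, Submodule.Quotient.eq]
      have hmem : (w : V) - c • u - (w : V) ∈ U := by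
        simpa [sub_sub_cancel_left] using neg_mem (Submodule.smul_mem U c huU)
      simpa [hL, Submodule.inclusion] using hmem
  rw [← claim, ← hecoe, map_symm_map_aux]
end
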